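/- Let S be a finite set of points in the plane and let p be a point. Suppose L₁ consists of the c points of NNE(p) ∩ S with lowest y-coordinate (or all such points if fewer than c) and L₂ consists of the c points of ENE(p) ∩ S with smallest x-coordinate (or all such points if fewer than c). If |NE(p) ∩ S| ≥ c, then the smallest axis-parallel square with bottom-left corner p containing at least c points of S has side length equal to the c-th smallest value in the multiset {d_∞(p,q) : q ∈ L₁ ∪ L₂}, where d_∞(p,q) = max(|p_x − q_x|, |p_y − q_y|). -/

import Mathlib

noncomputable def dinf (p q : ℝ × ℝ) : ℝ := max |p.1 - q.1| |p.2 - q.2|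

def NEpred (p q : ℝ × ℝ) : Prop := p.1 ≤ q.1 ∧ p.2 ≤ q.2

def NNEpred (p q : ℝ × ℝ) : Prop := NEpred p q ∧ q.1 - p.1 ≤ q.2 - p.2

def ENEpred (p q : ℝ × ℝ) : Prop := NEpred p q ∧ q.2 - p.2 ≤ q.1 - p.1

def square (p : ℝ × ℝ) (s : ℝ) : Set (ℝ × ℝ) :=
  {q | p.1 ≤ q.1 ∧ q.1 ≤ p.1 + s ∧ p.2 ≤ q.2 ∧ q.2 ≤ p.2 + s}

/-!
Every point of `NE(p) ∩ S` at distance `< v` from `p` lies in `L₁ ∪ L₂`: if such a point of,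
say, `NNE(p)` were not in `L₁`, then all `c` points of `L₁` would lie strictly below it, hence
at distance `< v`, whereas fewer than `c` points of `L₁ ∪ L₂` are at distance `< v` (the point
realising `v` is among the `c` at distance `≤ v`). So no square of side `s < v` holds `c` points,
while the square of side `v` holds the `c` points of `L₁ ∪ L₂` at distance `≤ v`.
-/

open Finset

section Lowest

variable {α β : Type*} [LinearOrder β]

/-- Without ties, the `c` elements of `N` of smallest key (all of `N` if `#N < c`). -/
def lowest (N : Finset α) (k : α → β) (c : ℕ) : Finset α :=
  N.filter fun q => (N.filter fun r => k r < k q).card < c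

lemma card_filter_lt_lt_card_filter_le {U : Finset α} {f : α → β} {a : α} (ha : a ∈ U) :
    (U.filter (f · < f a)).card < (U.filter (f · ≤ f a)).card :=
  card_lt_card ⟨monotone_filter_right _ fun _ _ => le_of_lt,
    fun h => lt_irrefl _ (mem_filter.mp (h (mem_filter.mpr ⟨ha, le_rfl⟩))).2⟩

variable {N : Finset α} {k : α → β} {c : ℕ} {q : α}

lemma lowest_subset : lowest N k c ⊆ N := filter_subset _ _

lemma lt_of_mem_lowest_of_notMem (hq : q ∈ N) (hqL : q ∉ lowest N k c) {r : α}
    (hr : r ∈ lowest N k c) : k r < k q := by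
  by_contra! hle
  have hrank : (N.filter fun x => k x < k q).card ≤ (N.filter fun x => k x < k r).card :=
    card_le_card (monotone_filter_right _ fun _ _ h => h.trans_le hle)
  exact hqL (mem_filter.mpr ⟨hq, hrank.trans_lt (mem_filter.mp hr).2⟩)

/-- Ties do not matter: an element of minimal key outside `lowest N k c` has only elements of
`lowest N k c` below it, and at least `c` of them. -/
lemma le_card_lowest_of_notMem (hq : q ∈ N) (hqL : q ∉ lowest N k c) :
    c ≤ (lowest N k c).card := by
  classical
  obtain ⟨m, hm, hmin⟩ :=
    (N \ lowest N k c).exists_min_image k ⟨q, mem_sdiff.mpr ⟨hq, hqL⟩⟩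
  obtain ⟨hmN, hmL⟩ := mem_sdiff.mp hm
  have hbelow : (N.filter fun r => k r < k m) ⊆ lowest N k c := fun r hr => by
    obtain ⟨hrN, hrm⟩ := mem_filter.mp hr
    by_contra hrL
    exact (hmin r (mem_sdiff.mpr ⟨hrN, hrL⟩)).not_gt hrm
  exact (not_lt.mp fun h => hmL (mem_filter.mpr ⟨hmN, h⟩)).trans (card_le_card hbelow)

lemma mem_lowest_of_card_filter_lt {γ : Type*} [LinearOrder γ] {U : Finset α} {f : α → γ}
    {v : γ}
    (hkf : ∀ a ∈ N, ∀ b ∈ N, k a < k b → f a < f b) (hLU : lowest N k c ⊆ U)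
    (hfew : (U.filter fun r => f r < v).card < c) (hq : q ∈ N) (hqv : f q < v) :
    q ∈ lowest N k c := by
  by_contra hqL
  have hsub : lowest N k c ⊆ U.filter fun r => f r < v := fun r hr =>
    mem_filter.mpr ⟨hLU hr,
      (hkf r (lowest_subset hr) q hq (lt_of_mem_lowest_of_notMem hq hqL hr)).trans hqv⟩
  exact (le_card_lowest_of_notMem hq hqL).not_gt ((card_le_card hsub).trans_lt hfew)

end Lowest

section Cones

variable {p q : ℝ × ℝ}

lemma dinf_nonneg (p q : ℝ × ℝ) : 0 ≤ dinf p q :=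
  (abs_nonneg _).trans (le_max_left _ _)

lemma dinf_of_NEpred (h : NEpred p q) : dinf p q = max (q.1 - p.1) (q.2 - p.2) := by
  rw [dinf, abs_sub_comm, abs_of_nonneg (sub_nonneg.mpr h.1), abs_sub_comm,
    abs_of_nonneg (sub_nonneg.mpr h.2)]

lemma dinf_of_NNEpred (h : NNEpred p q) : dinf p q = q.2 - p.2 := by
  rw [dinf_of_NEpred h.1, max_eq_right h.2]

lemma dinf_of_ENEpred (h : ENEpred p q) : dinf p q = q.1 - p.1 := by
  rw [dinf_of_NEpred h.1, max_eq_left h.2]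

lemma NNEpred_or_ENEpred (h : NEpred p q) : NNEpred p q ∨ ENEpred p q :=
  (le_total (q.1 - p.1) (q.2 - p.2)).imp (And.intro h) (And.intro h)

lemma mem_square_iff {s : ℝ} : q ∈ square p s ↔ NEpred p q ∧ dinf p q ≤ s := by
  refine ⟨fun ⟨h1, h2, h3, h4⟩ => ⟨⟨h1, h3⟩, ?_⟩, fun ⟨hNE, hs⟩ => ?_⟩
  · rw [dinf_of_NEpred ⟨h1, h3⟩]
    exact max_le (by linarith) (by linarith)
  · rw [dinf_of_NEpred hNE, max_le_iff] at hs
    exact ⟨hNE.1, by linarith [hs.1], hNE.2, by linarith [hs.2]⟩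

lemma filter_mem_square (S : Finset (ℝ × ℝ)) (p : ℝ × ℝ) (s : ℝ)
    [DecidablePred (· ∈ square p s)] [DecidablePred (NEpred p)] :
    S.filter (· ∈ square p s) = (S.filter (NEpred p)).filter (dinf p · ≤ s) := by
  ext q
  simp only [mem_filter, mem_square_iff, and_assoc]

lemma dinf_lt_dinf_of_NNEpred {r : ℝ × ℝ} (hq : NNEpred p q) (hr : NNEpred p r)
    (h : q.2 < r.2) : dinf p q < dinf p r := by
  rw [dinf_of_NNEpred hq, dinf_of_NNEpred hr]
  linarith

lemma dinf_lt_dinf_of_ENEpred {r : ℝ × ℝ} (hq : ENEpred p q) (hr : ENEpred p r)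
    (h : q.1 < r.1) : dinf p q < dinf p r := by
  rw [dinf_of_ENEpred hq, dinf_of_ENEpred hr]
  linarith

end Cones

section ConeLowest

open Classical

noncomputable def coneLowest (S : Finset (ℝ × ℝ)) (p : ℝ × ℝ) (c : ℕ) : Finset (ℝ × ℝ) :=
  lowest (S.filter (NNEpred p)) Prod.snd c ∪ lowest (S.filter (ENEpred p)) Prod.fst c

variable {S : Finset (ℝ × ℝ)} {p : ℝ × ℝ} {c : ℕ}

lemma coneLowest_subset : coneLowest S p c ⊆ S.filter (NEpred p) :=
  union_subset (lowest_subset.trans (monotone_filter_right _ fun _ _ h => h.1))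
    (lowest_subset.trans (monotone_filter_right _ fun _ _ h => h.1))

lemma filter_dinf_lt_subset_coneLowest {v : ℝ}
    (hfew : ((coneLowest S p c).filter (dinf p · < v)).card < c) :
    (S.filter (NEpred p)).filter (dinf p · < v) ⊆ coneLowest S p c := by
  intro q hq
  obtain ⟨⟨hqS, hqp⟩, hqv⟩ := And.imp_left mem_filter.mp (mem_filter.mp hq)
  rcases NNEpred_or_ENEpred hqp with hNNE | hENE
  · exact mem_union_left _ <| mem_lowest_of_card_filter_lt
      (fun a ha b hb hab => dinf_lt_dinf_of_NNEpred (mem_filter.mp ha).2 (mem_filter.mp hb).2 hab)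
      subset_union_left hfew (mem_filter.mpr ⟨hqS, hNNE⟩) hqv
  · exact mem_union_right _ <| mem_lowest_of_card_filter_lt
      (fun a ha b hb hab => dinf_lt_dinf_of_ENEpred (mem_filter.mp ha).2 (mem_filter.mp hb).2 hab)
      subset_union_right hfew (mem_filter.mpr ⟨hqS, hENE⟩) hqv

end ConeLowest

open Classical in
theorem smallest_square_from_cones_general
    (S : Finset (ℝ × ℝ)) (c : ℕ) (p : ℝ × ℝ)
    (L₁ L₂ : Finset (ℝ × ℝ))
    -- L₁: the (at most) c points of NNE(p) ∩ S with lowest y-coordinate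
    (hL₁ : L₁ = (S.filter (NNEpred p)).filter
      (fun q => ((S.filter (NNEpred p)).filter (fun r => r.2 < q.2)).card < c))
    -- L₂: the (at most) c points of ENE(p) ∩ S with smallest x-coordinate
    (hL₂ : L₂ = (S.filter (ENEpred p)).filter
      (fun q => ((S.filter (ENEpred p)).filter (fun r => r.1 < q.1)).card < c))
    (v : ℝ)
    -- v is the c-th smallest value in {d∞(p,q) : q ∈ L₁ ∪ L₂}
    (hv : v ∈ (L₁ ∪ L₂).image (dinf p))
    (hvc : ((L₁ ∪ L₂).filter (fun q => dinf p q ≤ v)).card = c) :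
    IsLeast {s : ℝ | 0 ≤ s ∧ c ≤ (S.filter (fun q => q ∈ square p s)).card} v := by
  have hL : L₁ ∪ L₂ = coneLowest S p c := by rw [hL₁, hL₂]; rfl
  rw [hL] at hv hvc
  obtain ⟨q₀, hq₀, rfl⟩ := mem_image.mp hv
  have hfew : ((coneLowest S p c).filter (dinf p · < dinf p q₀)).card < c :=
    (card_filter_lt_lt_card_filter_le hq₀).trans_eq hvc
  refine ⟨⟨dinf_nonneg p q₀, ?_⟩, fun s ⟨_, hs⟩ => ?_⟩
  · rw [filter_mem_square, ← hvc]
    exact card_le_card (filter_subset_filter _ coneLowest_subset)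
  · by_contra! hlt
    rw [filter_mem_square] at hs
    have hsub : (S.filter (NEpred p)).filter (dinf p · ≤ s) ⊆
        (coneLowest S p c).filter (dinf p · < dinf p q₀) := fun q hq =>
      have hqv : dinf p q < dinf p q₀ := (mem_filter.mp hq).2.trans_lt hlt
      mem_filter.mpr ⟨filter_dinf_lt_subset_coneLowest hfew
        (mem_filter.mpr ⟨(mem_filter.mp hq).1, hqv⟩), hqv⟩
    exact (hs.trans (card_le_card hsub)).not_gt hfew

open Classical in
theorem smallest_square_from_cones
    (S : Finset (ℝ × ℝ)) (c : ℕ) (hc : 1 ≤ c) (p : ℝ × ℝ)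
    (hgenx : ∀ q ∈ S, ∀ r ∈ S, q ≠ r → q.1 ≠ r.1)
    (hgeny : ∀ q ∈ S, ∀ r ∈ S, q ≠ r → q.2 ≠ r.2)
    (hgeninf : ∀ q ∈ S, ∀ r ∈ S, q ≠ r → dinf p q ≠ dinf p r)
    (hcard : c ≤ (S.filter (NEpred p)).card)
    (L₁ L₂ : Finset (ℝ × ℝ))
    -- L₁: the (at most) c points of NNE(p) ∩ S with lowest y-coordinate
    (hL₁ : L₁ = (S.filter (NNEpred p)).filter
      (fun q => ((S.filter (NNEpred p)).filter (fun r => r.2 < q.2)).card < c))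
    -- L₂: the (at most) c points of ENE(p) ∩ S with smallest x-coordinate
    (hL₂ : L₂ = (S.filter (ENEpred p)).filter
      (fun q => ((S.filter (ENEpred p)).filter (fun r => r.1 < q.1)).card < c))
    (v : ℝ)
    -- v is the c-th smallest value in {d∞(p,q) : q ∈ L₁ ∪ L₂}
    (hv : v ∈ (L₁ ∪ L₂).image (dinf p))
    (hvc : ((L₁ ∪ L₂).filter (fun q => dinf p q ≤ v)).card = c) :
    IsLeast {s : ℝ | 0 ≤ s ∧ c ≤ (S.filter (fun q => q ∈ square p s)).card} v :=
  smallest_square_from_cones_general S c p L₁ L₂ hL₁ hL₂ v hv hvc
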